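/- arXiv:2412.17368 — 9 statements merged into one kernel-verified Lean document; each statement's English description precedes it below -/
import Mathlib

section
/- A third order Hermitian tensor A is positive definite if and only if for each fixed index i, the slice matrix A(i) = (a_{ijk})_{j,k} is a positive definite Hermitian matrix. -/
open ComplexOrder

namespace Matrix

theorem star_dotProduct_mulVec_eq_sum {ι R : Type*} [Fintype ι] [CommSemiring R]
    [StarRing R] (M : Matrix ι ι R) (x : ι → R) :
    star x ⬝ᵥ M *ᵥ x = ∑ j, ∑ k, M j k * star (x j) * x k := by
  simp only [dotProduct, mulVec, Finset.mul_sum, Pi.star_apply]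
  exact Finset.sum_congr rfl fun j _ => Finset.sum_congr rfl fun k _ => by ring

end Matrix

/-- A third order Hermitian tensor is positive definite iff each slice
matrix `A(i) = (a_{ijk})_{j,k}` is a positive definite (Hermitian) matrix. -/
theorem hermitian_tensor_pd_iff_slices_pd
    (n : ℕ) (A : Fin n → Fin n → Fin n → ℂ)
    (hH : ∀ i j k, A i j k = A j k i ∧ A i j k = A k i j ∧
      A i j k = star (A j i k) ∧ A i j k = star (A i k j) ∧
      A i j k = star (A k j i)) :
    (∀ x : Fin n → ℂ, x ≠ 0 → ∀ i, 0 < ∑ j, ∑ k, A i j k * star (x j) * x k)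
      ↔ ∀ i, Matrix.PosDef (Matrix.of fun j k => A i j k) := by
  have slice_isHermitian : ∀ i, (Matrix.of fun j k => A i j k).IsHermitian := fun i =>
    Matrix.IsHermitian.ext fun j k => ((hH i j k).2.2.2.1).symm
  simp only [Matrix.posDef_iff_dotProduct_mulVec, slice_isHermitian, true_and,
    Matrix.star_dotProduct_mulVec_eq_sum, Matrix.of_apply]
  exact ⟨fun h i x hx => h x hx i, fun h x hx i => h i hx⟩
end

section
/- If A = (a_{ijk}) is a third order positive semi-definite Hermitian tensor, then for all i, j, the entries a_{iij}, a_{ijj}, and a_{iji} are nonnegative real numbers. -/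
open ComplexOrder

/-- If `A` is a third order positive semi-definite Hermitian tensor, then the
entries `a_{iij}`, `a_{ijj}`, `a_{iji}` are nonnegative real numbers. -/
theorem psd_hermitian_tensor_entries_nonneg
    (n : ℕ) (A : Fin n → Fin n → Fin n → ℂ)
    (hH : ∀ i j k, A i j k = A j k i ∧ A i j k = A k i j ∧
      A i j k = star (A j i k) ∧ A i j k = star (A i k j) ∧
      A i j k = star (A k j i))
    (hpsd : ∀ x : Fin n → ℂ, ∀ i, 0 ≤ ∑ j, ∑ k, A i j k * star (x j) * x k) :
    ∀ i j : Fin n, 0 ≤ A i i j ∧ 0 ≤ A i j j ∧ 0 ≤ A i j i := by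
  have key : ∀ i j : Fin n, 0 ≤ A i j j := by
    intro i j
    have h := hpsd (fun k => if k = j then 1 else 0) i
    simpa [apply_ite (star : ℂ → ℂ), mul_ite, ite_mul] using h
  intro i j
  have h1 : A i i j = A i j i := (hH i i j).1
  have h2 : A i i j = A j i i := (hH i i j).2.1
  refine ⟨?_, key i j, ?_⟩
  · rw [h2]; exact key j i
  · rw [← h1, h2]; exact key j i
end

section
/- If A is a third order positive definite Hermitian tensor, then for all i, j, the entries a_{iij}, a_{ijj}, and a_{iji} are strictly positive real numbers. -/
open ComplexOrder

/-- If `A` is a third order positive definite Hermitian tensor, then the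
entries `a_{iij}`, `a_{ijj}`, `a_{iji}` are strictly positive real numbers. -/
theorem pd_hermitian_tensor_entries_pos
    (n : ℕ) (A : Fin n → Fin n → Fin n → ℂ)
    (hH : ∀ i j k, A i j k = A j k i ∧ A i j k = A k i j ∧
      A i j k = star (A j i k) ∧ A i j k = star (A i k j) ∧
      A i j k = star (A k j i))
    (hpd : ∀ x : Fin n → ℂ, x ≠ 0 → ∀ i,
      0 < ∑ j, ∑ k, A i j k * star (x j) * x k) :
    ∀ i j : Fin n, 0 < A i i j ∧ 0 < A i j j ∧ 0 < A i j i := by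
  have key : ∀ p q : Fin n, 0 < A p q q := by
    intro p q
    have hx : (Pi.single q 1 : Fin n → ℂ) ≠ 0 := by
      intro h
      have := congrFun h q
      simp at this
    have := hpd (Pi.single q 1) hx p
    have hs : (∑ j, ∑ k, A p j k * star ((Pi.single q 1 : Fin n → ℂ) j) * (Pi.single q 1 : Fin n → ℂ) k)
        = A p q q := by
      rw [Finset.sum_eq_single q]
      · rw [Finset.sum_eq_single q]
        · simp
        · intro b _ hb; simp [Pi.single_apply, hb]
        · simp
      · intro b _ hb
        apply Finset.sum_eq_zero
        intro k _
        simp [Pi.single_apply, hb]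
      · simp
    rwa [hs] at this
  intro i j
  refine ⟨?_, key i j, ?_⟩
  · have h := (hH i i j).2.1
    rw [h]; exact key j i
  · have h := (hH i j i).1
    rw [h]; exact key j i
end

section
/- If A is a third order strongly completely positive tensor A = ∑_{l=1}^{r} (u^{(l)})^3 where every u^{(l)} is a strictly positive vector in R^n and {u^{(1)},...,u^{(r)}} spans R^n, then A is a third order positive definite symmetric tensor. -/
/-!
The slice `A(i)` factors as `Uᵀ D U`, where the rows of `U` are the vectors `u⁽ˡ⁾` and
`D = diag(u⁽ˡ⁾ᵢ)`, so `xᵀ A(i) x = ∑ₗ u⁽ˡ⁾ᵢ ⟨u⁽ˡ⁾, x⟩²`. The weights `u⁽ˡ⁾ᵢ` are positive, and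
since the `u⁽ˡ⁾` span `ℝⁿ`, the only `x` orthogonal to all of them is `0`.
-/

open Matrix

namespace Matrix

variable {ι n R : Type*} [Fintype ι]

theorem mulVec_injective_of_span_row_eq_top [Fintype n] [CommRing R] [LinearOrder R]
    [IsStrictOrderedRing R] {M : Matrix ι n R} (hM : Submodule.span R (Set.range M.row) = ⊤) :
    Function.Injective M.mulVec := by
  rw [← coe_mulVecLin, ← LinearMap.ker_eq_bot, ker_mulVecLin_eq_bot_iff]
  intro x hx
  obtain ⟨w, hw⟩ : x ∈ LinearMap.range M.vecMulLinear := by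
    rw [range_vecMulLinear, hM]
    exact Submodule.mem_top
  rw [vecMulLinear_apply] at hw
  have hself : x ⬝ᵥ x = 0 :=
    calc x ⬝ᵥ x = w ᵥ* M ⬝ᵥ x := by rw [hw]
      _ = w ⬝ᵥ M *ᵥ x := (dotProduct_mulVec w M x).symm
      _ = 0 := by rw [hx, dotProduct_zero]
  exact dotProduct_self_eq_zero.mp hself

theorem of_sum_mul_mul_eq_transpose_mul_diagonal_mul [CommSemiring R] [DecidableEq ι]
    (u : ι → n → R) (i : n) :
    (of fun j k => ∑ l, u l i * u l j * u l k) = (of u)ᵀ * diagonal (fun l => u l i) * of u := by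
  ext j k
  rw [mul_apply]
  simp only [of_apply, mul_diagonal, transpose_apply]
  exact Finset.sum_congr rfl fun l _ => by ring

end Matrix

/-- A strongly completely positive tensor `A = ∑_l (u^{(l)})^3` with all
`u^{(l)}` strictly positive and `{u^{(l)}}` spanning `ℝⁿ` is positive definite:
each slice matrix is positive definite. -/
theorem strongly_completely_positive_tensor_pd
    (n r : ℕ) (u : Fin r → Fin n → ℝ)
    (hu : ∀ l i, 0 < u l i)
    (hspan : Submodule.span ℝ (Set.range u) = ⊤)
    (A : Fin n → Fin n → Fin n → ℝ)
    (hA : ∀ i j k, A i j k = ∑ l, u l i * u l j * u l k) :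
    ∀ i, Matrix.PosDef (Matrix.of fun j k => A i j k) := by
  intro i
  simp_rw [hA, of_sum_mul_mul_eq_transpose_mul_diagonal_mul,
    ← conjTranspose_eq_transpose_of_trivial]
  exact (posDef_diagonal_iff.mpr fun l => hu l i).conjTranspose_mul_mul_same
    (mulVec_injective_of_span_row_eq_top hspan)
end

section
/- The third order positive Cauchy tensor A with a_{ijk} = 1/(c_i + c_j + c_k), where c is a strictly positive vector with pairwise distinct components, is a third order positive definite symmetric tensor (each slice matrix A(i) is positive definite). -/
/-!
The slice `A(i)` is the Cauchy matrix `1 / (d j + d k)` with `d j = c j + c i / 2`. For positive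
`d` this matrix is the Gram matrix of the exponentials `t ↦ exp (-d j * t)` in `L²(0, ∞)`, i.e.
`x ⬝ᵥ A x = ∫₀^∞ (∑ j, x j * exp (-d j * t))² dt`. For distinct `d j` the exponentials are
linearly independent, and an exponential sum is analytic, so it cannot vanish on all of
`(0, ∞)` unless `x = 0`.
-/

open Real MeasureTheory Set Matrix

theorem linearIndependent_exp_mul {ι : Type*} {d : ι → ℝ} (hd : Function.Injective d) :
    LinearIndependent ℝ fun j => fun t : ℝ => exp (d j * t) := by
  let φ : ι → Multiplicative ℝ →* ℝ := fun j =>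
    { toFun := fun t => exp (d j * t.toAdd)
      map_one' := by simp
      map_mul' := fun s t => by simp [toAdd_mul, mul_add, exp_add] }
  have hφ : Function.Injective φ := fun j k h => by
    have := DFunLike.congr_fun h (Multiplicative.ofAdd 1)
    simp only [φ, MonoidHom.coe_mk, OneHom.coe_mk, toAdd_ofAdd, mul_one] at this
    exact hd (exp_injective this)
  exact (linearIndependent_monoidHom (Multiplicative ℝ) ℝ).comp φ hφ

theorem exists_sum_mul_exp_mul_ne_zero {ι : Type*} [Fintype ι] {d x : ι → ℝ}
    (hd : Function.Injective d) (hx : x ≠ 0) {s : Set ℝ} (hs : IsOpen s) (hne : s.Nonempty) :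
    ∃ t ∈ s, ∑ j, x j * exp (d j * t) ≠ 0 := by
  by_contra! hzero
  obtain ⟨t₀, ht₀⟩ := hne
  have hanalytic : AnalyticOnNhd ℝ (fun t => ∑ j, x j * exp (d j * t)) univ :=
    Finset.analyticOnNhd_fun_sum _ fun j _ t _ =>
      analyticAt_const.mul (analyticAt_const.mul analyticAt_id).rexp
  have hvanish : (fun t => ∑ j, x j * exp (d j * t)) = 0 :=
    hanalytic.eq_of_eventuallyEq analyticOnNhd_const
      (Filter.eventuallyEq_of_mem (hs.mem_nhds ht₀) hzero)
  refine hx (funext (Fintype.linearIndependent_iff.mp (linearIndependent_exp_mul hd) x ?_))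
  simpa [funext_iff, Finset.sum_apply] using hvanish

theorem setIntegral_pos_of_continuous_nonneg {X : Type*} [TopologicalSpace X] [MeasurableSpace X]
    [OpensMeasurableSpace X] {μ : Measure X} [μ.IsOpenPosMeasure] {s : Set X} (hs : IsOpen s)
    {f : X → ℝ} (hf : Continuous f) (hint : IntegrableOn f s μ) (hnonneg : 0 ≤ f) {x : X}
    (hx : x ∈ s) (hfx : f x ≠ 0) : 0 < ∫ y in s, f y ∂μ := by
  rw [setIntegral_pos_iff_support_of_nonneg_ae (Filter.Eventually.of_forall hnonneg) hint]
  exact (hf.isOpen_support.inter hs).measure_pos μ ⟨x, hfx, hx⟩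

section CauchyMatrix

variable {ι : Type*} [Fintype ι] {d : ι → ℝ}

theorem sum_mul_exp_sq (x : ι → ℝ) (t : ℝ) :
    (∑ j, x j * exp (-d j * t)) ^ 2 = ∑ j, ∑ k, x j * x k * exp (-(d j + d k) * t) := by
  simp only [sq, Finset.sum_mul_sum, neg_add, add_mul, exp_add]
  exact Finset.sum_congr rfl fun j _ => Finset.sum_congr rfl fun k _ => by ring

theorem integrableOn_sum_mul_exp_sq (hd : ∀ j, 0 < d j) (x : ι → ℝ) :
    IntegrableOn (fun t => (∑ j, x j * exp (-d j * t)) ^ 2) (Ioi 0) := by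
  simp only [sum_mul_exp_sq]
  exact integrable_finsetSum _ fun j _ => integrable_finsetSum _ fun k _ =>
    (exp_neg_integrableOn_Ioi 0 (add_pos (hd j) (hd k))).const_mul _

theorem dotProduct_cauchy_mulVec (hd : ∀ j, 0 < d j) (x : ι → ℝ) :
    x ⬝ᵥ (of fun j k => 1 / (d j + d k)) *ᵥ x =
      ∫ t in Ioi 0, (∑ j, x j * exp (-d j * t)) ^ 2 := by
  have hterm (j k : ι) :
      ∫ t in Ioi 0, x j * x k * exp (-(d j + d k) * t) = x j * (1 / (d j + d k) * x k) := by
    have hjk := add_pos (hd j) (hd k)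
    rw [integral_const_mul, integral_exp_mul_Ioi (neg_neg_of_pos hjk)]
    field_simp
    simp
  have hint (j k : ι) : IntegrableOn (fun t => x j * x k * exp (-(d j + d k) * t)) (Ioi 0) :=
    (exp_neg_integrableOn_Ioi 0 (add_pos (hd j) (hd k))).const_mul _
  simp only [sum_mul_exp_sq]
  rw [integral_finsetSum _ fun j _ => integrable_finsetSum _ fun k _ => hint j k]
  simp only [integral_finsetSum _ fun k _ => hint _ k, hterm]
  simp [dotProduct, mulVec, Finset.mul_sum]

theorem posDef_cauchy (hd : ∀ j, 0 < d j) (hinj : Function.Injective d) :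
    (of fun j k => 1 / (d j + d k)).PosDef := by
  refine posDef_iff_dotProduct_mulVec.mpr ⟨?_, fun x hx => ?_⟩
  · ext j k
    simp [add_comm]
  obtain ⟨t, ht, hFt⟩ := exists_sum_mul_exp_mul_ne_zero (d := -d) (neg_injective.comp hinj) hx
    isOpen_Ioi nonempty_Ioi
  rw [star_trivial, dotProduct_cauchy_mulVec hd]
  exact setIntegral_pos_of_continuous_nonneg isOpen_Ioi (by fun_prop)
    (integrableOn_sum_mul_exp_sq hd x) (fun t => sq_nonneg _) ht (pow_ne_zero 2 hFt)

end CauchyMatrix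

/-- The third order positive Cauchy tensor `a_{ijk} = 1/(c_i+c_j+c_k)` with
`c` a strictly positive vector with pairwise distinct components is a third
order positive definite symmetric tensor: each slice matrix is positive
definite. -/
theorem cauchy_tensor_pos_def
    (n : ℕ) (c : Fin n → ℝ) (hc : ∀ i, 0 < c i)
    (hinj : Function.Injective c) :
    ∀ i : Fin n,
      Matrix.PosDef (Matrix.of fun j k : Fin n => 1 / (c i + c j + c k)) := by
  intro i
  have hslice : (of fun j k : Fin n => 1 / (c i + c j + c k)) =
      of fun j k => 1 / ((c j + c i / 2) + (c k + c i / 2)) := by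
    ext j k
    simp only [of_apply]
    ring
  rw [hslice]
  exact posDef_cauchy (fun j => add_pos (hc j) (half_pos (hc i)))
    fun j k h => hinj (add_right_cancel h)
end

section
/- The third order Lehmer tensor A with a_{ijk} = min(i,j,k)/max(i,j,k) is a third order positive definite symmetric tensor: for each fixed k, the slice matrix (min(i,j,k)/max(i,j,k))_{i,j} is positive definite. -/
/-!
The identity `min(a,b,m) · max(a,m) · max(b,m) = m · min(a,b) · max(a,b,m)` gives
`min(i,j,k)/max(i,j,k) = k · min(i,j) / (max(i,k) · max(j,k))`, so the `k`-th slice is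
`k · D M D` with `D = diag(1/max(i,k))` and `M = (min(i,j))_{i,j}` the min matrix.
`M = L Lᵀ` for the lower triangular all-ones matrix `L`, which has determinant one,
so `M`, and with it every slice, is positive definite.
-/

open Matrix

theorem min_mul_max_mul_max {α : Type*} [CommSemigroup α] [LinearOrder α] (a b m : α) :
    min (min a b) m * (max a m * max b m) = m * min a b * max (max a b) m := by
  rcases le_total a b with h | h
  · rw [min_eq_left h, max_eq_right h, ← mul_assoc, min_mul_max, mul_comm a m, mul_assoc]
  · rw [min_eq_right h, max_eq_left h, mul_comm (max a m), ← mul_assoc, min_mul_max,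
      mul_comm b m, mul_assoc]

theorem min_min_div_max_max {α : Type*} [Field α] [LinearOrder α] [IsStrictOrderedRing α]
    {a b : α} (m : α) (ha : 0 < a) (hb : 0 < b) :
    min (min a b) m / max (max a b) m = m * min a b / (max a m * max b m) := by
  rw [div_eq_div_iff (by positivity) (by positivity)]
  exact min_mul_max_mul_max a b m

theorem Matrix.PosDef.diagonal_mul_mul_diagonal {ι : Type*} [Fintype ι] [DecidableEq ι]
    {A : Matrix ι ι ℝ} (hA : A.PosDef) {d : ι → ℝ} (hd : ∀ i, d i ≠ 0) :
    (diagonal d * A * diagonal d).PosDef := by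
  have hinj : Function.Injective (diagonal d).mulVec :=
    mulVec_injective_iff_isUnit.mpr <|
      isUnit_diagonal.mpr <| Pi.isUnit_iff.mpr fun i => (hd i).isUnit
  simpa using hA.conjTranspose_mul_mul_same hinj

theorem posDef_min_add_one (n : ℕ) :
    (Matrix.of fun i j : Fin n => min ((i : ℝ) + 1) ((j : ℝ) + 1)).PosDef := by
  set L : Matrix (Fin n) (Fin n) ℝ := Matrix.of fun i t => if t ≤ i then 1 else 0
  have hL : L.IsLowerTriangular := fun i t (h : i < t) => by simp [L, not_le.mpr h]
  have hdet : L.det = 1 := by simp [det_of_isLowerTriangular L hL, L]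
  have hinj : Function.Injective L.vecMul :=
    vecMul_injective_iff_isUnit.mpr ((isUnit_iff_isUnit_det L).mpr (by simp [hdet]))
  convert PosDef.mul_conjTranspose_self L hinj using 1
  ext i j
  simp only [of_apply, mul_apply, conjTranspose_apply, star_trivial, L,
    ite_zero_mul_ite_zero, one_mul, ← le_min_iff, Finset.sum_boole]
  rw [Finset.filter_ge_eq_Iic, Fin.card_Iic, Fin.coe_min]
  push_cast
  exact min_add_add_right _ _ _

/-- The third order Lehmer tensor `a_{ijk} = min(i,j,k)/max(i,j,k)` (indices
`1,…,n`) is a third order positive definite symmetric tensor: for each fixed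
`k`, the slice matrix is positive definite. -/
theorem lehmer_tensor_pos_def (n : ℕ) :
    ∀ k : Fin n,
      Matrix.PosDef (Matrix.of fun i j : Fin n =>
        ((min (min (i.1 + 1) (j.1 + 1)) (k.1 + 1) : ℕ) : ℝ) /
          ((max (max (i.1 + 1) (j.1 + 1)) (k.1 + 1) : ℕ) : ℝ)) := by
  intro k
  set d : Fin n → ℝ := fun i => (max ((i : ℝ) + 1) (k + 1))⁻¹
  have hslice : (Matrix.of fun i j : Fin n =>
      ((min (min (i.1 + 1) (j.1 + 1)) (k.1 + 1) : ℕ) : ℝ) /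
        ((max (max (i.1 + 1) (j.1 + 1)) (k.1 + 1) : ℕ) : ℝ)) =
      ((k : ℝ) + 1) •
        (diagonal d * Matrix.of (fun i j : Fin n => min ((i : ℝ) + 1) ((j : ℝ) + 1)) *
          diagonal d) := by
    ext i j
    simp only [of_apply, Matrix.smul_apply, smul_eq_mul, diagonal_mul, mul_diagonal, d]
    push_cast
    rw [min_min_div_max_max _ (by positivity) (by positivity)]
    ring
  rw [hslice]
  exact ((posDef_min_add_one n).diagonal_mul_mul_diagonal fun i => by positivity).smul
    (by positivity)
end

section
/- The third order Lehmer tensor satisfies the Hadamard factorization A = B ∘ D, where B = ∑_{k=1}^{n-1} 1/(k(k+1)) (∑_{i=1}^{k} e_i)^3 + (1/n) e^3 and D = ∑_{k=1}^{n} (∑_{i=k}^{n} e_i)^3, with ∘ denoting the entrywise (Hadamard) product. -/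
lemma lehmer_aux1 (M : ℕ) (hM : 1 ≤ M) :
    ∀ n : ℕ, M ≤ n →
      ∑ m ∈ Finset.Icc M (n - 1), (1 / ((m : ℝ) * ((m : ℝ) + 1))) = 1 / M - 1 / n := by
  intro n hn
  induction n, hn using Nat.le_induction with
  | base =>
      have : M - 1 < M := Nat.sub_lt (by omega) one_pos
      rw [show Finset.Icc M (M - 1) = ∅ by
        apply Finset.Icc_eq_empty; omega]
      simp
  | succ n hn ih =>
      have hn1 : n - 1 + 1 = n := by omega
      have h1 : (n + 1 : ℕ) - 1 = (n - 1) + 1 := by omega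
      rw [h1, Finset.sum_Icc_succ_top (by omega), hn1, ih]
      have hn0 : (n : ℝ) ≠ 0 := Nat.cast_ne_zero.mpr (by omega)
      have hn0' : (n : ℝ) + 1 ≠ 0 := by positivity
      push_cast
      field_simp
      ring

/-- Hadamard factorization of the Lehmer tensor: entrywise,
`min(i,j,k)/max(i,j,k) = b_{ijk} · d_{ijk}` where
`B = ∑_{m=1}^{n-1} (1/(m(m+1))) (∑_{i≤m} e_i)^3 + (1/n) e^3` and
`D = ∑_{m=1}^{n} (∑_{i≥m} e_i)^3`. (Indices `1,…,n`.) -/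
theorem lehmer_tensor_hadamard_factorization (n : ℕ) (hn : 0 < n) :
    ∀ i j k : Fin n,
      ((min (min (i.1 + 1) (j.1 + 1)) (k.1 + 1) : ℕ) : ℝ) /
          ((max (max (i.1 + 1) (j.1 + 1)) (k.1 + 1) : ℕ) : ℝ)
        = (∑ m ∈ Finset.Icc 1 (n - 1),
              (1 / ((m : ℝ) * ((m : ℝ) + 1))) *
                (if i.1 + 1 ≤ m ∧ j.1 + 1 ≤ m ∧ k.1 + 1 ≤ m then 1 else 0)
            + 1 / (n : ℝ)) *
          (∑ m ∈ Finset.Icc 1 n,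
            if m ≤ i.1 + 1 ∧ m ≤ j.1 + 1 ∧ m ≤ k.1 + 1 then (1 : ℝ) else 0) := by
  intro i j k
  set a := min (min (i.1 + 1) (j.1 + 1)) (k.1 + 1) with ha
  set b := max (max (i.1 + 1) (j.1 + 1)) (k.1 + 1) with hb
  have hb1 : 1 ≤ b := by omega
  have hbn : b ≤ n := by
    have := i.2; have := j.2; have := k.2; omega
  have ha1 : 1 ≤ a := by omega
  have han : a ≤ n := by
    have := i.2; omega
  -- first factor = 1/b
  have hfst : (∑ m ∈ Finset.Icc 1 (n - 1),
      (1 / ((m : ℝ) * ((m : ℝ) + 1))) *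
        (if i.1 + 1 ≤ m ∧ j.1 + 1 ≤ m ∧ k.1 + 1 ≤ m then 1 else 0)
      + 1 / (n : ℝ)) = 1 / (b : ℝ) := by
    have hcond : ∀ m : ℕ, (i.1 + 1 ≤ m ∧ j.1 + 1 ≤ m ∧ k.1 + 1 ≤ m) ↔ b ≤ m := by
      intro m; omega
    have : ∑ m ∈ Finset.Icc 1 (n - 1),
        (1 / ((m : ℝ) * ((m : ℝ) + 1))) *
          (if i.1 + 1 ≤ m ∧ j.1 + 1 ≤ m ∧ k.1 + 1 ≤ m then 1 else 0)
        = ∑ m ∈ Finset.Icc b (n - 1), (1 / ((m : ℝ) * ((m : ℝ) + 1))) := by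
      have hfil : (Finset.Icc 1 (n - 1)).filter
          (fun m => i.1 + 1 ≤ m ∧ j.1 + 1 ≤ m ∧ k.1 + 1 ≤ m) = Finset.Icc b (n - 1) := by
        ext m
        simp only [Finset.mem_filter, Finset.mem_Icc, hcond]
        omega
      rw [← hfil, Finset.sum_filter]
      exact Finset.sum_congr rfl (fun m _ => by split <;> simp)
    rw [this, lehmer_aux1 b hb1 n hbn]
    ring
  have hsnd : (∑ m ∈ Finset.Icc 1 n,
      if m ≤ i.1 + 1 ∧ m ≤ j.1 + 1 ∧ m ≤ k.1 + 1 then (1 : ℝ) else 0) = (a : ℝ) := by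
    have hfil : (Finset.Icc 1 n).filter
        (fun m => m ≤ i.1 + 1 ∧ m ≤ j.1 + 1 ∧ m ≤ k.1 + 1) = Finset.Icc 1 a := by
      ext m
      simp only [Finset.mem_filter, Finset.mem_Icc]
      omega
    rw [← Finset.sum_filter, hfil]
    simp [Nat.card_Icc]
  rw [hfst, hsnd]
  ring
end

section
/- If B is a third order sub-Hermitian tensor, then its cubic power A = g(B), defined by a_{ijk} = ∑_{r,s,t=1}^{n} b_{irs} b_{jrt}^* b_{kst} (equivalently a_{ijk} = ∑_{r,s,t} b_{irs} c_{jtr} d_{kst} with C = D = B), is a third order Hermitian tensor, i.e., a_{ijk} = a_{jki} = a_{kij} = a_{jik}^* = a_{ikj}^* = a_{kji}^*. -/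
/-- The cubic power `A = g(B)`, `a_{ijk} = ∑_{r,s,t} b_{irs} b_{jrt}^* b_{kst}`,
of a third order sub-Hermitian tensor `B` is a third order Hermitian tensor. -/
theorem cubic_power_of_subhermitian_is_hermitian
    (n : ℕ) (B : Fin n → Fin n → Fin n → ℂ)
    (hB : ∀ i j k, B i j k = star (B i k j))
    (A : Fin n → Fin n → Fin n → ℂ)
    (hA : ∀ i j k, A i j k = ∑ r, ∑ s, ∑ t, B i r s * star (B j r t) * B k s t) :
    ∀ i j k, A i j k = A j k i ∧ A i j k = A k i j ∧
      A i j k = star (A j i k) ∧ A i j k = star (A i k j) ∧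
      A i j k = star (A k j i) := by
  have hA' : ∀ i j k, A i j k = ∑ p : Fin n × Fin n × Fin n,
      B i p.1 p.2.1 * star (B j p.1 p.2.2) * B k p.2.1 p.2.2 := by
    intro i j k
    rw [hA]
    simp [Fintype.sum_prod_type]
  have cyc : ∀ i j k, A i j k = A j k i := by
    intro i j k
    rw [hA' i j k, hA' j k i]
    refine Fintype.sum_equiv
      (⟨fun p => (p.2.2, p.1, p.2.1), fun p => (p.2.1, p.2.2, p.1),
        fun p => rfl, fun p => rfl⟩ :
        (Fin n × Fin n × Fin n) ≃ (Fin n × Fin n × Fin n)) _ _ ?_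
    rintro ⟨r, s, t⟩
    simp only [Equiv.coe_fn_mk]
    rw [← hB j t r, ← hB k s t]
    ring
  have conj : ∀ i j k, A i j k = star (A j i k) := by
    intro i j k
    rw [hA' i j k, hA' j i k, star_sum]
    refine Fintype.sum_equiv
      (⟨fun p => (p.1, p.2.2, p.2.1), fun p => (p.1, p.2.2, p.2.1),
        fun p => rfl, fun p => rfl⟩ :
        (Fin n × Fin n × Fin n) ≃ (Fin n × Fin n × Fin n)) _ _ ?_
    rintro ⟨r, s, t⟩
    simp only [Equiv.coe_fn_mk, star_mul, star_star]
    rw [← hB j t r, ← hB k s t]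
    ring
  intro i j k
  refine ⟨cyc i j k, (cyc i j k).trans (cyc j k i), conj i j k, ?_, ?_⟩
  · have h : A i k j = star (A i j k) :=
      (conj i k j).trans (congrArg star (cyc k i j))
    rw [h, star_star]
  · have h : A k j i = star (A i j k) :=
      (conj k j i).trans (congrArg star (cyc i j k).symm)
    rw [h, star_star]
end

section
/- For the cubic power A = g(L) of a lower triangular sub-Hermitian tensor L, the k-th slice matrix satisfies A^k = ∑_{s,t=1}^{k} l_{kst} L^s (L^t)^*, where L^s is the matrix (l_{irs})_{i,r} and (L^t)^* its conjugate transpose; in particular the sum ranges only over s,t ≤ k. -/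
open Finset

section

variable {ι M : Type*} [Fintype ι] [LinearOrder ι] [LocallyFiniteOrderBot ι] [AddCommMonoid M]

theorem Finset.sum_Iic_eq_sum_univ {f : ι → M} {k : ι} (h : ∀ i, k < i → f i = 0) :
    ∑ i ∈ Iic k, f i = ∑ i, f i :=
  sum_subset (subset_univ _) fun i _ hi => h i (by simpa using hi)

theorem Finset.sum_Iic_sum_Iic_eq_sum_sum {f : ι → ι → M} {k : ι}
    (h : ∀ s t, (k < s ∨ k < t) → f s t = 0) :
    ∑ s ∈ Iic k, ∑ t ∈ Iic k, f s t = ∑ s, ∑ t, f s t := by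
  rw [sum_Iic_eq_sum_univ fun s hs => sum_eq_zero fun t _ => h s t (Or.inl hs)]
  exact sum_congr rfl fun s _ => sum_Iic_eq_sum_univ fun t ht => h s t (Or.inr ht)

end

theorem Finset.sum_sum_sum_mul_eq_sum_sum_mul_sum {ρ σ τ R : Type*} [Fintype ρ] [Fintype σ]
    [Fintype τ] [CommSemiring R] (a : ρ → σ → τ → R) (c : σ → τ → R) :
    ∑ r, ∑ s, ∑ t, a r s t * c s t = ∑ s, ∑ t, c s t * ∑ r, a r s t := by
  simp only [mul_sum]
  rw [sum_comm]
  refine sum_congr rfl fun s _ => ?_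
  rw [sum_comm]
  exact sum_congr rfl fun t _ => sum_congr rfl fun r _ => mul_comm _ _

theorem cubic_power_slice_formula_general
    (n : ℕ) (L : Fin n → Fin n → Fin n → ℂ)
    (hlow : ∀ i j k, (i < j ∨ i < k) → L i j k = 0) :
    ∀ k i j : Fin n,
      ∑ r, ∑ s, ∑ t, L i r s * star (L j r t) * L k s t
        = ∑ s ∈ Finset.Iic k, ∑ t ∈ Finset.Iic k,
            L k s t * ∑ r, L i r s * star (L j r t) := by
  intro k i j
  rw [sum_Iic_sum_Iic_eq_sum_sum fun s t hst => by rw [hlow k s t hst, zero_mul]]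
  exact sum_sum_sum_mul_eq_sum_sum_mul_sum (fun r s t => L i r s * star (L j r t)) (L k)

/-- For the cubic power of a lower triangular sub-Hermitian tensor `L`, the
`k`-th slice satisfies `A^k = ∑_{s,t ≤ k} l_{kst} L^s (L^t)^*`: the sum ranges
only over `s, t ≤ k`. -/
theorem cubic_power_slice_formula
    (n : ℕ) (L : Fin n → Fin n → Fin n → ℂ)
    (hlow : ∀ i j k, (i < j ∨ i < k) → L i j k = 0)
    (hsub : ∀ i j k, L i j k = star (L i k j)) :
    ∀ k i j : Fin n,
      ∑ r, ∑ s, ∑ t, L i r s * star (L j r t) * L k s t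
        = ∑ s ∈ Finset.Iic k, ∑ t ∈ Finset.Iic k,
            L k s t * ∑ r, L i r s * star (L j r t) :=
  cubic_power_slice_formula_general n L hlow
end
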